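/- (Richardson) Let (W,S) be a Coxeter system and let I, J ⊆ S be subsets with W_I and W_J finite. Let w₀(I) and w₀(J) denote the longest elements of W_I and W_J, and suppose w₀(I) ∈ Z(W_I) and w₀(J) ∈ Z(W_J). Then w₀(I) and w₀(J) are conjugate in W if and only if I and J are conjugate in W, i.e., there exists w ∈ W with w I w⁻¹ = J (as subsets of W). -/

import Mathlib

/-!
Inversions are controlled through Tits' construction: `W` acts on `W × ZMod 2`, the simple
reflection `s i` sending `(t, e)` to `(s i * t * s i, e + [t = s i])`, and the second coordinate
of `w • (t, 0)` is `1` exactly when `t` is a right inversion of `w`. This gives the strong exchange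
condition and a cocycle rule for inversions of products. Consequently, for `p ∈ W_K`,
`ℓ (z * p) = ℓ z + ℓ p` when no reflection of `W_K` is a right inversion of `z`, and
`ℓ (z * p) = ℓ z - ℓ p` when all of them are; the latter makes the longest element unique.

If `w I w⁻¹ = J`, conjugation by `w` turns words in `I` into words in `J` of the same length, so
it preserves length on `W_I` and maps `w₀(I)` to the longest element `w₀(J)` of `W_J`.

Conversely, let `x w₀(I) x⁻¹ = w₀(J)` with `x` of minimal length. By centrality, `x * s i`
(`i ∈ I`) and `r * x` (`r` a reflection of `W_J`) conjugate `w₀(I)` to `w₀(J)` as well, so by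
minimality `ℓ (x * s i) = ℓ x + 1` and no reflection of `W_J` is a left inversion of `x`. The
reflection `t = x s_i x⁻¹` is a right inversion of `w₀(J)`, hence lies in `W_J`, and then
`ℓ x + 1 = ℓ (x⁻¹ * t) = ℓ x + ℓ t` forces `t` to be a simple reflection of `J`.
-/

theorem List.even_count_of_getElem_add_eq {α : Type*} [BEq α] [LawfulBEq α] {l : List α}
    {m : ℕ} (hl : l.length = 2 * m) (h : ∀ k (hk : k < m), l[k] = l[k + m]) (a : α) :
    Even (l.count a) := by
  have hdrop : l.drop m = l.take m :=
    List.ext_getElem (by simp; omega) fun k _ _ => by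
      simp only [List.getElem_drop, List.getElem_take, add_comm m k]
      exact (h k (by simp at *; omega)).symm
  rw [← List.take_append_drop m l, List.count_append, hdrop]
  exact ⟨_, rfl⟩

theorem image_conj_inv_eq_of_image_conj_eq {G : Type*} [Group G] {X Y : Set G} {w : G}
    (h : (fun x => w * x * w⁻¹) '' X = Y) : (fun x => w⁻¹ * x * w⁻¹⁻¹) '' Y = X := by
  rw [← h, Set.image_image]
  simp [mul_assoc]

namespace CoxeterSystem

variable {B W : Type*} [Group W] {M : CoxeterMatrix B} (cs : CoxeterSystem M W)

local prefix:100 "s" => cs.simple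
local prefix:100 "π" => cs.wordProd
local prefix:100 "ℓ" => cs.length
local prefix:100 "ris " => cs.rightInvSeq
local prefix:100 "lis " => cs.leftInvSeq

theorem prod_map_alternatingWord_two_mul {G : Type*} [Monoid G] (f : B → G) (i j : B) (m : ℕ) :
    ((alternatingWord i j (2 * m)).map f).prod = (f i * f j) ^ m := by
  induction m with
  | zero => simp [alternatingWord]
  | succ m ih =>
    rw [show 2 * (m + 1) = 2 * m + 1 + 1 by ring, alternatingWord_succ', alternatingWord_succ']
    simp [ih, pow_succ', mul_assoc]

theorem leftInvSeq_eq_map_rightInvSeq (ω : List B) :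
    lis ω = (ris ω).map (MulAut.conj (π ω)) := by
  induction ω with
  | nil => simp
  | cons i ω ih =>
    simp only [leftInvSeq, rightInvSeq, ih, List.map_cons, List.map_map, wordProd_cons]
    congr 1
    · simp [mul_assoc]
    · exact List.map_congr_left fun t _ => by simp [mul_assoc]

/- The word multiplies to `1`, so its right and left inversion sequences agree, and the `k`-th
entry `s i * (s j * s i) ^ k` of the latter has period `M i j`. -/
theorem even_count_rightInvSeq_alternatingWord_two_mul [BEq W] [LawfulBEq W] (i j : B) (t : W) :
    Even ((ris (alternatingWord i j (2 * M i j))).count t) := by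
  have hprod : π (alternatingWord i j (2 * M i j)) = 1 := by
    simp [prod_alternatingWord_eq_mul_pow]
  have hlis : ∀ k, π (alternatingWord j i (2 * k + 1)) = s i * (s j * s i) ^ k := fun k => by
    simp [prod_alternatingWord_eq_mul_pow, Nat.mul_add_div]
  have hris : ris (alternatingWord i j (2 * M i j)) = lis (alternatingWord i j (2 * M i j)) := by
    rw [leftInvSeq_eq_map_rightInvSeq, hprod]
    simp
  rw [hris]
  refine List.even_count_of_getElem_add_eq (m := M i j) (by simp) (fun k hk => ?_) t
  rw [getElem_leftInvSeq_alternatingWord cs i j _ k (by omega),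
    getElem_leftInvSeq_alternatingWord cs i j _ (k + M i j) (by omega), hlis, hlis, pow_add,
    M.symmetric, simple_mul_simple_pow, mul_one]

section ReflectionRepresentation

open scoped Classical

noncomputable def simpleReflectionPerm (i : B) : Equiv.Perm (W × ZMod 2) :=
  Function.Involutive.toPerm (fun p => (s i * p.1 * s i, p.2 + if p.1 = s i then 1 else 0))
    fun p => by
      have hconj : s i * p.1 * s i = s i ↔ p.1 = s i := by
        constructor <;> intro h
        · simpa [mul_assoc] using congrArg (fun x => s i * x * s i) h
        · simp [h]
      ext
      · simp [mul_assoc]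
      · by_cases h : p.1 = s i
        · simp [h, add_assoc, CharTwo.add_self_eq_zero]
        · simp [h, hconj]

theorem simpleReflectionPerm_apply (i : B) (t : W) (e : ZMod 2) :
    cs.simpleReflectionPerm i (t, e) = (s i * t * s i, e + if t = s i then 1 else 0) :=
  rfl

theorem prod_map_simpleReflectionPerm_apply (ω : List B) (t : W) (e : ZMod 2) :
    (ω.map cs.simpleReflectionPerm).prod (t, e) =
      (π ω * t * (π ω)⁻¹, e + (ris ω).count t) := by
  induction ω generalizing e with
  | nil => simp
  | cons i ω ih =>
    have hcond : π ω * t * (π ω)⁻¹ = s i ↔ (π ω)⁻¹ * s i * π ω = t := by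
      constructor <;> intro h <;> rw [← h] <;> group
    rw [List.map_cons, List.prod_cons, Equiv.Perm.mul_apply, ih, simpleReflectionPerm_apply,
      rightInvSeq, List.count_cons, wordProd_cons]
    ext
    · simp [mul_assoc]
    · simp [hcond, add_assoc]

theorem isLiftable_simpleReflectionPerm : M.IsLiftable cs.simpleReflectionPerm := by
  intro i j
  rw [← prod_map_alternatingWord_two_mul]
  ext ⟨t, e⟩ : 1
  rw [prod_map_simpleReflectionPerm_apply, (ZMod.natCast_eq_zero_iff_even).mpr
    (cs.even_count_rightInvSeq_alternatingWord_two_mul i j t)]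
  simp [prod_alternatingWord_eq_mul_pow]

noncomputable def reflectionRep : W →* Equiv.Perm (W × ZMod 2) :=
  cs.lift ⟨cs.simpleReflectionPerm, cs.isLiftable_simpleReflectionPerm⟩

theorem reflectionRep_wordProd (ω : List B) :
    cs.reflectionRep (π ω) = (ω.map cs.simpleReflectionPerm).prod := by
  rw [wordProd, map_list_prod, List.map_map]
  exact congrArg _ (List.map_congr_left fun i _ => cs.lift_apply_simple _ i)

noncomputable def inversionParity (w t : W) : ZMod 2 := (cs.reflectionRep w (t, 0)).2

theorem inversionParity_wordProd (ω : List B) (t : W) :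
    cs.inversionParity (π ω) t = (ris ω).count t := by
  simp [inversionParity, reflectionRep_wordProd, prod_map_simpleReflectionPerm_apply]

theorem reflectionRep_apply (w t : W) (e : ZMod 2) :
    cs.reflectionRep w (t, e) = (w * t * w⁻¹, e + cs.inversionParity w t) := by
  obtain ⟨ω, rfl⟩ := cs.wordProd_surjective w
  rw [reflectionRep_wordProd, prod_map_simpleReflectionPerm_apply, inversionParity_wordProd]

theorem inversionParity_mul (a b t : W) :
    cs.inversionParity (a * b) t = cs.inversionParity b t + cs.inversionParity a (b * t * b⁻¹) := by
  rw [inversionParity, map_mul, Equiv.Perm.mul_apply, reflectionRep_apply, reflectionRep_apply,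
    zero_add]

theorem inversionParity_one (t : W) : cs.inversionParity 1 t = 0 := by
  simpa using cs.inversionParity_wordProd [] t

theorem inversionParity_inv (w t : W) :
    cs.inversionParity w⁻¹ t = cs.inversionParity w (w⁻¹ * t * w) := by
  have h := cs.inversionParity_mul w w⁻¹ t
  rwa [mul_inv_cancel, inversionParity_one, inv_inv, eq_comm, CharTwo.add_eq_zero] at h

theorem inversionParity_conj_of_commute {h t : W} (hc : Commute h t) (g : W) :
    cs.inversionParity (g * h * g⁻¹) (g * t * g⁻¹) = cs.inversionParity h t := by
  have hconj : h * t * h⁻¹ = t := by rw [hc.eq, mul_inv_cancel_right]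
  have hcancel : g⁻¹ * (g * t * g⁻¹) * g = t := by group
  rw [inversionParity_mul, inversionParity_mul, inversionParity_inv, inv_inv, hcancel, hconj]
  rw [add_comm, add_assoc, CharTwo.add_self_eq_zero, add_zero]

theorem inversionParity_self {t : W} (ht : cs.IsReflection t) : cs.inversionParity t t = 1 := by
  obtain ⟨x, i, rfl⟩ := ht
  rw [inversionParity_conj_of_commute cs (Commute.refl _)]
  simpa using cs.inversionParity_wordProd [i] (s i)

theorem mem_rightInvSeq_of_inversionParity_eq_one {ω : List B} {t : W}
    (h : cs.inversionParity (π ω) t = 1) : t ∈ ris ω := by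
  by_contra hmem
  rw [inversionParity_wordProd, List.count_eq_zero_of_not_mem hmem, Nat.cast_zero] at h
  exact zero_ne_one h

theorem inversionParity_eq_zero_or_eq_one (w t : W) :
    cs.inversionParity w t = 0 ∨ cs.inversionParity w t = 1 := by
  obtain ⟨ω, rfl⟩ := cs.wordProd_surjective w
  rw [inversionParity_wordProd]
  exact CharTwo.natCast_cases (R := ZMod 2) _

theorem isRightInversion_of_inversionParity_eq_one {w t : W} (h : cs.inversionParity w t = 1) :
    cs.IsRightInversion w t := by
  obtain ⟨ω, hω, rfl⟩ := cs.exists_isReduced w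
  exact cs.isRightInversion_of_mem_rightInvSeq hω (cs.mem_rightInvSeq_of_inversionParity_eq_one h)

theorem inversionParity_eq_one_iff {w t : W} :
    cs.inversionParity w t = 1 ↔ cs.IsRightInversion w t := by
  refine ⟨cs.isRightInversion_of_inversionParity_eq_one, fun ht => ?_⟩
  refine (cs.inversionParity_eq_zero_or_eq_one w t).resolve_left fun h0 => ?_
  have hwt : cs.IsRightInversion (w * t) t := by
    apply cs.isRightInversion_of_inversionParity_eq_one
    rw [inversionParity_mul, inversionParity_self cs ht.1, mul_inv_cancel_right, h0, add_zero]
  have := hwt.2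
  rw [mul_assoc, ht.1.mul_self, mul_one] at this
  exact absurd ht.2 (by omega)

theorem inversionParity_eq_zero_iff {w t : W} :
    cs.inversionParity w t = 0 ↔ ¬cs.IsRightInversion w t := by
  rw [← inversionParity_eq_one_iff]
  rcases cs.inversionParity_eq_zero_or_eq_one w t with h | h <;> simp [h]

end ReflectionRepresentation

theorem mem_rightInvSeq_of_isRightInversion {ω : List B} {t : W}
    (ht : cs.IsRightInversion (π ω) t) : t ∈ ris ω :=
  cs.mem_rightInvSeq_of_inversionParity_eq_one (cs.inversionParity_eq_one_iff.mpr ht)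

theorem isRightInversion_mul_iff_of_not_isRightInversion {a b t : W}
    (hb : ¬cs.IsRightInversion b t) :
    cs.IsRightInversion (a * b) t ↔ cs.IsRightInversion a (b * t * b⁻¹) := by
  rw [← inversionParity_eq_one_iff, ← inversionParity_eq_one_iff, inversionParity_mul,
    cs.inversionParity_eq_zero_iff.mpr hb, zero_add]

theorem isRightInversion_conj_iff_of_commute {h t : W} (hc : Commute h t) (g : W) :
    cs.IsRightInversion (g * h * g⁻¹) (g * t * g⁻¹) ↔ cs.IsRightInversion h t := by
  rw [← inversionParity_eq_one_iff, ← inversionParity_eq_one_iff,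
    inversionParity_conj_of_commute cs hc]

theorem exists_reduced_sublist (ω : List B) :
    ∃ ω', ω'.Sublist ω ∧ cs.IsReduced ω' ∧ π ω' = π ω := by
  induction ω using List.reverseRecOn with
  | nil => exact ⟨[], List.Sublist.refl _, by simp [IsReduced], rfl⟩
  | append_singleton ω i ih =>
    obtain ⟨ω', hsub, hred, hprod⟩ := ih
    have hprod_i : π (ω ++ [i]) = π ω' * s i := by simp [wordProd_append, hprod]
    rcases cs.length_mul_simple (π ω') i with hlen | hlen
    · refine ⟨ω' ++ [i], hsub.append (List.Sublist.refl _), ?_, by simp [wordProd_append, hprod]⟩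
      simp [IsReduced, wordProd_append, hlen, hred.eq]
    · have hinv : cs.IsRightInversion (π ω') (s i) := ⟨cs.isReflection_simple i, by omega⟩
      obtain ⟨j, hj, hget⟩ := List.getElem_of_mem (cs.mem_rightInvSeq_of_isRightInversion hinv)
      have herase : π ω' * s i = π (ω'.eraseIdx j) := by
        rw [← wordProd_mul_getD_rightInvSeq, List.getD_eq_getElem _ _ hj, hget]
      refine ⟨ω'.eraseIdx j, ((List.eraseIdx_sublist _ _).trans hsub).trans
        (List.sublist_append_left _ _), ?_, by rw [← herase, hprod_i]⟩
      have hlen' := List.length_eraseIdx_add_one (l := ω') (by simpa using hj)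
      rw [IsReduced, ← herase]
      have := hred.eq
      omega

theorem exists_word_of_mem_closure {I : Set B} {w : W}
    (hw : w ∈ Subgroup.closure (cs.simple '' I)) :
    ∃ ω : List B, (∀ i ∈ ω, i ∈ I) ∧ π ω = w := by
  induction hw using Subgroup.closure_induction with
  | mem x hx =>
    obtain ⟨i, hi, rfl⟩ := hx
    exact ⟨[i], by simpa using hi, cs.wordProd_singleton i⟩
  | one => exact ⟨[], by simp, cs.wordProd_nil⟩
  | mul x y _ _ hx hy =>
    obtain ⟨ω₁, h₁, rfl⟩ := hx
    obtain ⟨ω₂, h₂, rfl⟩ := hy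
    exact ⟨ω₁ ++ ω₂, fun i hi => (List.mem_append.mp hi).elim (h₁ i) (h₂ i),
      cs.wordProd_append ω₁ ω₂⟩
  | inv x _ hx =>
    obtain ⟨ω, h, rfl⟩ := hx
    exact ⟨ω.reverse, fun i hi => h i (List.mem_reverse.mp hi), cs.wordProd_reverse ω⟩

theorem exists_reduced_word_of_mem_closure {I : Set B} {w : W}
    (hw : w ∈ Subgroup.closure (cs.simple '' I)) :
    ∃ ω : List B, (∀ i ∈ ω, i ∈ I) ∧ cs.IsReduced ω ∧ π ω = w := by
  obtain ⟨ω, hωI, rfl⟩ := cs.exists_word_of_mem_closure hw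
  obtain ⟨ω', hsub, hred, hprod⟩ := cs.exists_reduced_sublist ω
  exact ⟨ω', fun i hi => hωI i (hsub.subset hi), hred, hprod⟩

theorem wordProd_mem_closure {I : Set B} {ω : List B} (h : ∀ i ∈ ω, i ∈ I) :
    π ω ∈ Subgroup.closure (cs.simple '' I) :=
  Subgroup.list_prod_mem _ <| List.forall_mem_map.mpr fun i hi =>
    Subgroup.subset_closure ⟨i, h i hi, rfl⟩

theorem mem_closure_of_mem_rightInvSeq {I : Set B} {ω : List B} (h : ∀ i ∈ ω, i ∈ I) {t : W}
    (ht : t ∈ ris ω) : t ∈ Subgroup.closure (cs.simple '' I) := by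
  induction ω with
  | nil => simp at ht
  | cons i ω ih =>
    have hω : ∀ j ∈ ω, j ∈ I := fun j hj => h j (List.mem_cons_of_mem i hj)
    rcases List.mem_cons.mp ht with rfl | ht
    · have hπ := cs.wordProd_mem_closure hω
      exact mul_mem (mul_mem (inv_mem hπ)
        (Subgroup.subset_closure ⟨i, h i List.mem_cons_self, rfl⟩)) hπ
    · exact ih hω ht

theorem mem_closure_of_isRightInversion {I : Set B} {w t : W}
    (hw : w ∈ Subgroup.closure (cs.simple '' I)) (ht : cs.IsRightInversion w t) :
    t ∈ Subgroup.closure (cs.simple '' I) := by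
  obtain ⟨ω, hωI, rfl⟩ := cs.exists_word_of_mem_closure hw
  exact cs.mem_closure_of_mem_rightInvSeq hωI (cs.mem_rightInvSeq_of_isRightInversion ht)

theorem mem_image_simple_of_length_eq_one {I : Set B} {w : W}
    (hw : w ∈ Subgroup.closure (cs.simple '' I)) (h : ℓ w = 1) : w ∈ cs.simple '' I := by
  obtain ⟨ω, hωI, hred, rfl⟩ := cs.exists_reduced_word_of_mem_closure hw
  obtain ⟨i, rfl⟩ := List.length_eq_one_iff.mp (hred.eq ▸ h)
  exact ⟨i, hωI i (List.mem_singleton_self i), (cs.wordProd_singleton i).symm⟩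

theorem isRightInversion_mul_wordProd_iff {ω : List B} {i : B} (hω : cs.IsReduced (ω ++ [i]))
    (z : W) :
    cs.IsRightInversion (z * π ω) (s i) ↔ cs.IsRightInversion z (π ω * s i * (π ω)⁻¹) := by
  refine cs.isRightInversion_mul_iff_of_not_isRightInversion fun h => ?_
  have hlen := hω.eq
  have := h.2
  rw [wordProd_append, wordProd_singleton, List.length_append, List.length_singleton] at hlen
  have := cs.length_wordProd_le ω
  omega

theorem conj_simple_mem_closure {K : Set B} {ω : List B} {i : B} (h : ∀ j ∈ ω ++ [i], j ∈ K) :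
    π ω * s i * (π ω)⁻¹ ∈ Subgroup.closure (cs.simple '' K) := by
  have hω := cs.wordProd_mem_closure fun j hj => h j (List.mem_append_left _ hj)
  exact mul_mem (mul_mem hω (Subgroup.subset_closure ⟨i, h i (by simp), rfl⟩)) (inv_mem hω)

theorem length_mul_of_forall_not_isRightInversion {K : Set B} {z p : W}
    (hz : ∀ r ∈ Subgroup.closure (cs.simple '' K), cs.IsReflection r → ¬cs.IsRightInversion z r)
    (hp : p ∈ Subgroup.closure (cs.simple '' K)) : ℓ (z * p) = ℓ z + ℓ p := by
  obtain ⟨ω, hωK, hω, rfl⟩ := cs.exists_reduced_word_of_mem_closure hp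
  clear hp
  rw [hω.eq]
  induction ω using List.reverseRecOn with
  | nil => simp
  | append_singleton ω i ih =>
    have hωK' : ∀ j ∈ ω, j ∈ K := fun j hj => hωK j (List.mem_append_left _ hj)
    have hr := hz _ (cs.conj_simple_mem_closure hωK) ⟨π ω, i, rfl⟩
    rw [← cs.isRightInversion_mul_wordProd_iff hω] at hr
    have hlen : ℓ (z * π ω * s i) = ℓ (z * π ω) + 1 :=
      (cs.length_mul_simple _ i).resolve_right fun h =>
        hr ⟨cs.isReflection_simple i, by omega⟩
    rw [wordProd_append, wordProd_singleton, ← mul_assoc, hlen,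
      ih hωK' (by simpa using hω.take ω.length), List.length_append, List.length_singleton,
      add_assoc]

theorem length_mul_add_length_of_forall_isRightInversion {K : Set B} {z p : W}
    (hz : ∀ r ∈ Subgroup.closure (cs.simple '' K), cs.IsReflection r → cs.IsRightInversion z r)
    (hp : p ∈ Subgroup.closure (cs.simple '' K)) : ℓ (z * p) + ℓ p = ℓ z := by
  obtain ⟨ω, hωK, hω, rfl⟩ := cs.exists_reduced_word_of_mem_closure hp
  clear hp
  rw [hω.eq]
  induction ω using List.reverseRecOn with
  | nil => simp
  | append_singleton ω i ih =>
    have hωK' : ∀ j ∈ ω, j ∈ K := fun j hj => hωK j (List.mem_append_left _ hj)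
    have hr := hz _ (cs.conj_simple_mem_closure hωK) ⟨π ω, i, rfl⟩
    rw [← cs.isRightInversion_mul_wordProd_iff hω] at hr
    rw [wordProd_append, wordProd_singleton, ← mul_assoc, List.length_append,
      List.length_singleton, ← ih hωK' (by simpa using hω.take ω.length)]
    have := hr.2
    have := cs.length_mul_simple (z * π ω) i
    omega

def IsLongestIn (H : Subgroup W) (u : W) : Prop := u ∈ H ∧ ∀ p ∈ H, ℓ p ≤ ℓ u

theorem isRightInversion_of_isLongestIn {H : Subgroup W} {u t : W} (hu : cs.IsLongestIn H u)
    (ht : cs.IsReflection t) (htH : t ∈ H) : cs.IsRightInversion u t :=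
  ⟨ht, lt_of_le_of_ne (hu.2 _ (H.mul_mem hu.1 htH)) (ht.length_mul_left_ne u)⟩

theorem isRightDescent_of_isLongestIn {I : Set B} {u : W}
    (hu : cs.IsLongestIn (Subgroup.closure (cs.simple '' I)) u) {i : B} (hi : i ∈ I) :
    cs.IsRightDescent u i :=
  (cs.isRightInversion_simple_iff_isRightDescent u i).mp <|
    cs.isRightInversion_of_isLongestIn hu (cs.isReflection_simple i)
      (Subgroup.subset_closure ⟨i, hi, rfl⟩)

theorem eq_of_isLongestIn {I : Set B} {u p : W}
    (hu : cs.IsLongestIn (Subgroup.closure (cs.simple '' I)) u)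
    (hp : p ∈ Subgroup.closure (cs.simple '' I)) (hlen : ℓ u ≤ ℓ p) : p = u := by
  have h := cs.length_mul_add_length_of_forall_isRightInversion
    (fun r hr hrefl => cs.isRightInversion_of_isLongestIn hu hrefl hr) (mul_mem (inv_mem hu.1) hp)
  rw [mul_inv_cancel_left] at h
  exact (inv_mul_eq_one.mp (cs.length_eq_zero_iff.mp (by omega))).symm

theorem exists_word_conj_of_image_conj_eq {I J : Set B} {w p : W}
    (hw : (fun x => w * x * w⁻¹) '' (cs.simple '' I) = cs.simple '' J)
    (hp : p ∈ Subgroup.closure (cs.simple '' I)) :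
    ∃ ω : List B, (∀ j ∈ ω, j ∈ J) ∧ ω.length = ℓ p ∧ π ω = w * p * w⁻¹ := by
  have hconj : ∀ i, ∃ j, i ∈ I → j ∈ J ∧ s j = w * s i * w⁻¹ := fun i => by
    by_cases hi : i ∈ I
    · obtain ⟨j, hj, hji⟩ : w * s i * w⁻¹ ∈ cs.simple '' J := hw ▸ ⟨s i, ⟨i, hi, rfl⟩, rfl⟩
      exact ⟨j, fun _ => ⟨hj, hji⟩⟩
    · exact ⟨i, fun h => absurd h hi⟩
  choose f hf using hconj
  obtain ⟨ω, hωI, hω, rfl⟩ := cs.exists_reduced_word_of_mem_closure hp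
  refine ⟨ω.map f, ?_, by rw [List.length_map, hω.eq], ?_⟩
  · simp only [List.mem_map]
    rintro _ ⟨i, hi, rfl⟩
    exact (hf i (hωI i hi)).1
  · simp only [wordProd]
    rw [← MulAut.conj_apply, map_list_prod, List.map_map, List.map_map]
    exact congrArg _ (List.map_congr_left fun i hi => (hf i (hωI i hi)).2)

theorem conj_mem_closure_of_image_conj_eq {I J : Set B} {w p : W}
    (hw : (fun x => w * x * w⁻¹) '' (cs.simple '' I) = cs.simple '' J)
    (hp : p ∈ Subgroup.closure (cs.simple '' I)) :
    w * p * w⁻¹ ∈ Subgroup.closure (cs.simple '' J) := by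
  obtain ⟨ω, hωJ, -, hω⟩ := cs.exists_word_conj_of_image_conj_eq hw hp
  exact hω ▸ cs.wordProd_mem_closure hωJ

theorem length_conj_le_of_image_conj_eq {I J : Set B} {w p : W}
    (hw : (fun x => w * x * w⁻¹) '' (cs.simple '' I) = cs.simple '' J)
    (hp : p ∈ Subgroup.closure (cs.simple '' I)) : ℓ (w * p * w⁻¹) ≤ ℓ p := by
  obtain ⟨ω, -, hlen, hω⟩ := cs.exists_word_conj_of_image_conj_eq hw hp
  exact hω ▸ hlen ▸ cs.length_wordProd_le ω

theorem length_conj_of_image_conj_eq {I J : Set B} {w p : W}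
    (hw : (fun x => w * x * w⁻¹) '' (cs.simple '' I) = cs.simple '' J)
    (hp : p ∈ Subgroup.closure (cs.simple '' I)) : ℓ (w * p * w⁻¹) = ℓ p := by
  refine le_antisymm (cs.length_conj_le_of_image_conj_eq hw hp) ?_
  simpa [mul_assoc] using cs.length_conj_le_of_image_conj_eq
    (image_conj_inv_eq_of_image_conj_eq hw) (cs.conj_mem_closure_of_image_conj_eq hw hp)

theorem conj_eq_of_image_conj_eq {I J : Set B} {u v w : W}
    (hu : cs.IsLongestIn (Subgroup.closure (cs.simple '' I)) u)
    (hv : cs.IsLongestIn (Subgroup.closure (cs.simple '' J)) v)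
    (hw : (fun x => w * x * w⁻¹) '' (cs.simple '' I) = cs.simple '' J) :
    w * u * w⁻¹ = v := by
  have hw' := image_conj_inv_eq_of_image_conj_eq hw
  refine cs.eq_of_isLongestIn hv (cs.conj_mem_closure_of_image_conj_eq hw hu.1) ?_
  calc ℓ v = ℓ (w⁻¹ * v * w⁻¹⁻¹) := (cs.length_conj_of_image_conj_eq hw' hv.1).symm
    _ ≤ ℓ u := hu.2 _ (cs.conj_mem_closure_of_image_conj_eq hw' hv.1)
    _ = ℓ (w * u * w⁻¹) := (cs.length_conj_of_image_conj_eq hw hu.1).symm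

theorem conj_simple_mem_image_of_minimal {I J : Set B} {u v x : W}
    (hdesc : ∀ i ∈ I, cs.IsRightDescent u i) (hcomm : ∀ i ∈ I, Commute u (s i))
    (hv : v ∈ Subgroup.closure (cs.simple '' J))
    (hvcent : ∀ p ∈ Subgroup.closure (cs.simple '' J), Commute v p)
    (hx : x * u * x⁻¹ = v) (hmin : ∀ y, y * u * y⁻¹ = v → ℓ x ≤ ℓ y) {i : B} (hi : i ∈ I) :
    x * s i * x⁻¹ ∈ cs.simple '' J := by
  have hxs : ℓ (x * s i) = ℓ x + 1 := by
    refine (cs.length_mul_simple x i).resolve_right fun h => ?_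
    have hsu : s i * u * (s i)⁻¹ = u := by rw [← (hcomm i hi).eq, mul_inv_cancel_right]
    have hconj : x * s i * u * (x * s i)⁻¹ = v :=
      calc x * s i * u * (x * s i)⁻¹ = x * (s i * u * (s i)⁻¹) * x⁻¹ := by group
        _ = v := by rw [hsu, hx]
    have := hmin _ hconj
    omega
  have hleft : ∀ r ∈ Subgroup.closure (cs.simple '' J), cs.IsReflection r →
      ¬cs.IsRightInversion x⁻¹ r := fun r hrJ hr hinv => by
    have hrv : r * v * r⁻¹ = v := by rw [← (hvcent r hrJ).eq, mul_inv_cancel_right]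
    have hconj : r * x * u * (r * x)⁻¹ = v :=
      calc r * x * u * (r * x)⁻¹ = r * (x * u * x⁻¹) * r⁻¹ := by group
        _ = v := by rw [hx, hrv]
    have hlen : ℓ (r * x) = ℓ (x⁻¹ * r) := by rw [← cs.length_inv, mul_inv_rev, hr.inv]
    have := hmin _ hconj
    have := hinv.2
    rw [cs.length_inv] at this
    omega
  have ht : cs.IsRightInversion v (x * s i * x⁻¹) := hx ▸
    (cs.isRightInversion_conj_iff_of_commute (hcomm i hi) x).mpr
      ((cs.isRightInversion_simple_iff_isRightDescent u i).mpr (hdesc i hi))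
  have htJ := cs.mem_closure_of_isRightInversion hv ht
  have hlen := cs.length_mul_of_forall_not_isRightInversion hleft htJ
  rw [show x⁻¹ * (x * s i * x⁻¹) = (x * s i)⁻¹ by rw [mul_inv_rev, inv_simple]; group,
    cs.length_inv, cs.length_inv, hxs] at hlen
  exact cs.mem_image_simple_of_length_eq_one htJ (by omega)

theorem image_conj_eq_of_minimal {I J : Set B} {u v x : W}
    (hu : cs.IsLongestIn (Subgroup.closure (cs.simple '' I)) u)
    (hucent : ∀ p ∈ Subgroup.closure (cs.simple '' I), Commute u p)
    (hv : cs.IsLongestIn (Subgroup.closure (cs.simple '' J)) v)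
    (hvcent : ∀ p ∈ Subgroup.closure (cs.simple '' J), Commute v p)
    (hx : x * u * x⁻¹ = v) (hmin : ∀ y, y * u * y⁻¹ = v → ℓ x ≤ ℓ y) :
    (fun y => x * y * x⁻¹) '' (cs.simple '' I) = cs.simple '' J := by
  refine subset_antisymm ?_ fun _ ⟨j, hj, hsj⟩ => ?_
  · rintro _ ⟨_, ⟨i, hi, rfl⟩, rfl⟩
    exact cs.conj_simple_mem_image_of_minimal (fun i hi => cs.isRightDescent_of_isLongestIn hu hi)
      (fun i hi => hucent _ (Subgroup.subset_closure ⟨i, hi, rfl⟩)) hv.1 hvcent hx hmin hi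
  · have hx' : x⁻¹ * v * x⁻¹⁻¹ = u := by rw [← hx]; group
    have hmin' : ∀ y, y * v * y⁻¹ = u → ℓ x⁻¹ ≤ ℓ y := fun y hy => by
      rw [cs.length_inv, ← cs.length_inv y]
      exact hmin _ (by rw [← hy]; group)
    obtain ⟨i, hi, hsi⟩ := cs.conj_simple_mem_image_of_minimal
      (fun j hj => cs.isRightDescent_of_isLongestIn hv hj)
      (fun j hj => hvcent _ (Subgroup.subset_closure ⟨j, hj, rfl⟩)) hu.1 hucent hx' hmin' hj
    exact ⟨s i, ⟨i, hi, rfl⟩, by rw [hsi, ← hsj]; group⟩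

end CoxeterSystem

theorem stmt_8_general {B W : Type*} [Group W] {M : CoxeterMatrix B} (cs : CoxeterSystem M W)
    (I J : Set B)
    (u v : W)
    (huI : u ∈ Subgroup.closure (cs.simple '' I))
    (hulong : ∀ p ∈ Subgroup.closure (cs.simple '' I), cs.length p ≤ cs.length u)
    (hucent : ∀ p ∈ Subgroup.closure (cs.simple '' I), u * p = p * u)
    (hvJ : v ∈ Subgroup.closure (cs.simple '' J))
    (hvlong : ∀ p ∈ Subgroup.closure (cs.simple '' J), cs.length p ≤ cs.length v)
    (hvcent : ∀ p ∈ Subgroup.closure (cs.simple '' J), v * p = p * v) :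
    IsConj u v ↔
      ∃ w : W, (fun x => w * x * w⁻¹) '' (cs.simple '' I) = cs.simple '' J := by
  constructor
  · intro huv
    obtain ⟨c, hc⟩ := isConj_iff.mp huv
    obtain ⟨x, hx, hmin⟩ := (measure cs.length).wf.has_min {y | y * u * y⁻¹ = v} ⟨c, hc⟩
    exact ⟨x, cs.image_conj_eq_of_minimal ⟨huI, hulong⟩ hucent ⟨hvJ, hvlong⟩ hvcent hx
      fun y hy => not_lt.mp (hmin y hy)⟩
  · rintro ⟨w, hw⟩
    exact isConj_iff.mpr ⟨w, cs.conj_eq_of_image_conj_eq ⟨huI, hulong⟩ ⟨hvJ, hvlong⟩ hw⟩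

/-- (Richardson) Let `W_I` and `W_J` be finite standard parabolic subgroups whose longest
elements `u = w₀(I)` and `v = w₀(J)` are central in `W_I` resp. `W_J`.  Then `u` and `v` are
conjugate in `W` if and only if the subsets `I` and `J` of `W` (i.e. the corresponding sets of
simple reflections) are conjugate in `W`. -/
theorem stmt_8 {B W : Type*} [Group W] {M : CoxeterMatrix B} (cs : CoxeterSystem M W)
    (I J : Set B)
    (hI : Finite ↥(Subgroup.closure (cs.simple '' I)))
    (hJ : Finite ↥(Subgroup.closure (cs.simple '' J)))
    (u v : W)
    (huI : u ∈ Subgroup.closure (cs.simple '' I))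
    (hulong : ∀ p ∈ Subgroup.closure (cs.simple '' I), cs.length p ≤ cs.length u)
    (hucent : ∀ p ∈ Subgroup.closure (cs.simple '' I), u * p = p * u)
    (hvJ : v ∈ Subgroup.closure (cs.simple '' J))
    (hvlong : ∀ p ∈ Subgroup.closure (cs.simple '' J), cs.length p ≤ cs.length v)
    (hvcent : ∀ p ∈ Subgroup.closure (cs.simple '' J), v * p = p * v) :
    IsConj u v ↔
      ∃ w : W, (fun x => w * x * w⁻¹) '' (cs.simple '' I) = cs.simple '' J :=
  stmt_8_general cs I J u v huI hulong hucent hvJ hvlong hvcent
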